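/- For all a, b ∈ ℝ, ∫_{−∞}^{∞} Φ(a + bx) φ(x) dx = Φ(a / √(1 + b²)), where φ and Φ are the standard normal PDF and CDF. -/

import Mathlib

open MeasureTheory Real

/-- Standard normal probability density function. -/
noncomputable def stdPdf (x : ℝ) : ℝ := (Real.sqrt (2 * π))⁻¹ * Real.exp (-x ^ 2 / 2)

/-- Standard normal cumulative distribution function. -/
noncomputable def stdCdf (x : ℝ) : ℝ := ∫ t in Set.Iic x, stdPdf t

/-!
If `X` and `Z` are independent standard Gaussians, then `Φ(a + bx) = P(Z ≤ a + bx)`, so the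
integral is `P(Z - bX ≤ a)`. The law of `Z - bX` is the convolution of `N(0, b²)` with `N(0, 1)`,
that is `N(0, 1 + b²)`, and rescaling by `√(1 + b²)` turns its distribution function into `Φ`.
-/

open ProbabilityTheory Set NNReal

lemma stdPdf_eq_gaussianPDFReal : stdPdf = gaussianPDFReal 0 1 := by
  ext x
  simp [stdPdf, gaussianPDFReal]

lemma stdCdf_eq_measureReal (x : ℝ) : stdCdf x = (gaussianReal 0 1).real (Iic x) := by
  rw [measureReal_def, gaussianReal_apply_eq_integral _ one_ne_zero, ENNReal.toReal_ofReal
    (setIntegral_nonneg measurableSet_Iic fun _ _ ↦ gaussianPDFReal_nonneg _ _ _),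
    stdCdf, stdPdf_eq_gaussianPDFReal]

lemma integral_mul_stdPdf (f : ℝ → ℝ) : ∫ x, f x * stdPdf x = ∫ x, f x ∂gaussianReal 0 1 := by
  simp_rw [integral_gaussianReal_eq_integral_smul one_ne_zero, stdPdf_eq_gaussianPDFReal,
    smul_eq_mul, mul_comm]

lemma conv_apply_Iic (μ ν : Measure ℝ) [SFinite ν] (a : ℝ) :
    (μ ∗ ν) (Iic a) = ∫⁻ y, ν (Iic (a - y)) ∂μ := by
  rw [← lintegral_indicator_one measurableSet_Iic,
    Measure.lintegral_conv (measurable_one.indicator measurableSet_Iic)]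
  congr with y
  rw [← lintegral_indicator_one measurableSet_Iic]
  congr with z
  simp [indicator, le_sub_iff_add_le']

lemma measurable_measure_Iic (μ : Measure ℝ) : Measurable fun x ↦ μ (Iic x) :=
  Monotone.measurable fun _ _ h ↦ measure_mono (Iic_subset_Iic.2 h)

lemma gaussianReal_Iic {v : ℝ≥0} (hv : v ≠ 0) (a : ℝ) :
    gaussianReal 0 v (Iic a) = gaussianReal 0 1 (Iic (a / √v)) := by
  have hσ : 0 < √(v : ℝ) := by positivity
  have hmap : (gaussianReal 0 1).map (√(v : ℝ) * ·) = gaussianReal 0 v := by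
    rw [gaussianReal_map_const_mul, mul_zero, mul_one]
    congr
    exact sq_sqrt v.2
  rw [← hmap, Measure.map_apply (by fun_prop) measurableSet_Iic]
  congr with x
  simp [le_div_iff₀' hσ]

/-- Gaussian integral identity: `∫ Φ(a + bx) φ(x) dx = Φ(a / √(1 + b²))`. -/
theorem integral_cdf_mul_pdf (a b : ℝ) :
    ∫ x : ℝ, stdCdf (a + b * x) * stdPdf x = stdCdf (a / Real.sqrt (1 + b ^ 2)) := by
  calc ∫ x : ℝ, stdCdf (a + b * x) * stdPdf x
      = ∫ x, (gaussianReal 0 1 (Iic (a + b * x))).toReal ∂gaussianReal 0 1 := by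
        simp_rw [stdCdf_eq_measureReal, integral_mul_stdPdf, measureReal_def]
    _ = (∫⁻ x, gaussianReal 0 1 (Iic (a + b * x)) ∂gaussianReal 0 1).toReal :=
        integral_toReal ((measurable_measure_Iic _).comp (by fun_prop)).aemeasurable
          (ae_of_all _ fun _ ↦ measure_lt_top _ _)
    _ = (((gaussianReal 0 1).map (-b * ·) ∗ gaussianReal 0 1) (Iic a)).toReal := by
        rw [conv_apply_Iic, lintegral_map (by exact (measurable_measure_Iic _).comp (by fun_prop))
          (by fun_prop)]
        simp
    _ = (gaussianReal 0 (1 + b ^ 2).toNNReal (Iic a)).toReal := by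
        rw [gaussianReal_map_const_mul, gaussianReal_conv_gaussianReal]
        congr 3
        · simp
        · ext
          simp only [NNReal.coe_add, NNReal.coe_mul, coe_mk, coe_one,
            Real.coe_toNNReal _ (by positivity : 0 ≤ 1 + b ^ 2)]
          ring
    _ = stdCdf (a / Real.sqrt (1 + b ^ 2)) := by
        rw [gaussianReal_Iic (by positivity), stdCdf_eq_measureReal, measureReal_def,
          Real.coe_toNNReal _ (by positivity)]
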